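/- arXiv:2405.01898 — 2 statements merged into one kernel-verified Lean document; each statement's English description precedes it below -/
import Mathlib

section
/- Let λ1, λ2, λ3 > 0 and fix 0 < α < 8λ1λ2/λ3². Define L(x,y) = 4λ1x⁴(1−x²) − 2αy(λ2y − λ3x(1−x²)) + c(σ0+σ1x)²(6x²cos²θ + α sin²θ) for constants c ≥ 0 bounded by c0, σ0, σ1, θ real. Then there exist positive constants α1, α2, independent of c ∈ [0, c0], such that L(x,y) ≤ α1 − α2(1 + x⁴ + αy²) for all (x,y) ∈ ℝ². -/
lemma cube_aux (m B t : ℝ) (hm : 0 < m) (hB : 0 ≤ B) (ht : 0 ≤ t) :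
    B * t ^ 2 ≤ m * t ^ 3 + 4 * B ^ 3 / (27 * m ^ 2) := by
  rw [← sub_nonneg]
  have hfac : 0 ≤ (3 * m * t - 2 * B) ^ 2 * (3 * m * t + B) := by
    apply mul_nonneg (sq_nonneg _)
    have : 0 ≤ 3 * m * t := by positivity
    linarith
  have e : m * t ^ 3 + 4 * B ^ 3 / (27 * m ^ 2) - B * t ^ 2
      = (3 * m * t - 2 * B) ^ 2 * (3 * m * t + B) / (27 * m ^ 2) := by
    field_simp
    ring
  rw [e]
  exact div_nonneg hfac (by positivity)

theorem lyapunov_inequality (l1 l2 l3 a s0 s1 th c0 : ℝ)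
    (hl1 : 0 < l1) (hl2 : 0 < l2) (hl3 : 0 < l3)
    (ha : 0 < a) (ha' : a < 8 * l1 * l2 / l3 ^ 2) (hc0 : 0 ≤ c0) :
    ∃ a1 a2 : ℝ, 0 < a1 ∧ 0 < a2 ∧
      ∀ c : ℝ, c ∈ Set.Icc 0 c0 → ∀ x y : ℝ,
        4 * l1 * x ^ 4 * (1 - x ^ 2) - 2 * a * y * (l2 * y - l3 * x * (1 - x ^ 2))
          + c * (s0 + s1 * x) ^ 2 * (6 * x ^ 2 * Real.cos th ^ 2 + a * Real.sin th ^ 2)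
        ≤ a1 - a2 * (1 + x ^ 4 + a * y ^ 2) := by
  have hl3sq : 0 < l3 ^ 2 := pow_pos hl3 2
  have h8 : a * l3 ^ 2 < 8 * l1 * l2 := by
    have := (lt_div_iff₀ hl3sq).mp ha'
    linarith
  obtain ⟨g, hg_def⟩ : ∃ t : ℝ, t = l2 - a * l3 ^ 2 / (8 * l1) := ⟨_, rfl⟩
  have hg : 0 < g := by
    rw [hg_def, sub_pos, div_lt_iff₀ (by positivity)]
    linarith
  obtain ⟨s, hs_def⟩ : ∃ t : ℝ, t = a * l2 + a ^ 2 * l3 ^ 2 / (8 * l1) := ⟨_, rfl⟩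
  have hs : 0 < s := by rw [hs_def]; positivity
  obtain ⟨k, hk_def⟩ : ∃ t : ℝ, t = a ^ 2 * l3 ^ 2 / s := ⟨_, rfl⟩
  have hk : 0 < k := by rw [hk_def]; positivity
  have hks : k * s = a ^ 2 * l3 ^ 2 := by
    rw [hk_def]; field_simp
  have hkl : k < 4 * l1 := by
    rw [hk_def, div_lt_iff₀ hs, hs_def]
    have h1 : a * (a * l3 ^ 2) < a * (8 * l1 * l2) :=
      mul_lt_mul_of_pos_left h8 ha
    rw [mul_add]
    have e : 4 * l1 * (a ^ 2 * l3 ^ 2 / (8 * l1)) = a ^ 2 * l3 ^ 2 / 2 := by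
      field_simp; ring
    rw [e]
    linarith [h1]
  obtain ⟨m, hm_def⟩ : ∃ t : ℝ, t = 4 * l1 - k := ⟨_, rfl⟩
  have hm : 0 < m := by rw [hm_def]; linarith
  obtain ⟨A2, hA2_def⟩ : ∃ t : ℝ, t = k + 12 * c0 * s0 ^ 2 + 2 * a * c0 * s1 ^ 2 := ⟨_, rfl⟩
  have hc0s0 : 0 ≤ 12 * c0 * s0 ^ 2 := by positivity
  have hc0s1 : 0 ≤ 2 * a * c0 * s1 ^ 2 :=
    mul_nonneg (mul_nonneg (by linarith) hc0) (sq_nonneg s1)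
  have hA2 : 0 ≤ A2 := by rw [hA2_def]; linarith
  obtain ⟨B, hB_def⟩ : ∃ t : ℝ, t = 4 * l1 + 12 * c0 * s1 ^ 2 + g + A2 := ⟨_, rfl⟩
  have hc0s1' : 0 ≤ 12 * c0 * s1 ^ 2 := by positivity
  have hB : 0 < B := by rw [hB_def]; linarith
  have hdiv : 0 ≤ 4 * B ^ 3 / (27 * m ^ 2) := by
    apply div_nonneg _ (by positivity)
    linarith [pow_pos hB 3]
  have hacs : 0 ≤ 2 * a * c0 * s0 ^ 2 :=
    mul_nonneg (mul_nonneg (by linarith) hc0) (sq_nonneg s0)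
  refine ⟨4 * B ^ 3 / (27 * m ^ 2) + 2 * a * c0 * s0 ^ 2 + g + A2 / 4 + 1, g, by linarith, hg, ?_⟩
  intro c hc x y
  obtain ⟨hc1, hc2⟩ := hc
  -- Young's inequality for the cross term
  have h1 : 2 * a * l3 * x * (1 - x ^ 2) * y ≤ s * y ^ 2 + k * (x * (1 - x ^ 2)) ^ 2 := by
    have e : (s * y ^ 2 + k * (x * (1 - x ^ 2)) ^ 2 - 2 * a * l3 * x * (1 - x ^ 2) * y) * s
        = (s * y - a * l3 * (x * (1 - x ^ 2))) ^ 2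
          + (k * s - a ^ 2 * l3 ^ 2) * (x * (1 - x ^ 2)) ^ 2 := by ring
    have h0 : 0 * s ≤ (s * y ^ 2 + k * (x * (1 - x ^ 2)) ^ 2
        - 2 * a * l3 * x * (1 - x ^ 2) * y) * s := by
      rw [e, hks, sub_self]
      simpa using sq_nonneg (s * y - a * l3 * (x * (1 - x ^ 2)))
    have := le_of_mul_le_mul_right h0 hs
    linarith
  -- bound on the noise term
  have hP : (s0 + s1 * x) ^ 2 ≤ 2 * s0 ^ 2 + 2 * s1 ^ 2 * x ^ 2 := by
    linarith [sq_nonneg (s0 - s1 * x)]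
  have hRpos : 0 ≤ 6 * x ^ 2 * Real.cos th ^ 2 + a * Real.sin th ^ 2 :=
    add_nonneg (mul_nonneg (by positivity) (sq_nonneg _)) (mul_nonneg ha.le (sq_nonneg _))
  have hR : 6 * x ^ 2 * Real.cos th ^ 2 + a * Real.sin th ^ 2 ≤ 6 * x ^ 2 + a := by
    have hc' := Real.cos_sq_le_one th
    have hs' := Real.sin_sq_le_one th
    linarith [mul_nonneg (sq_nonneg x) (sub_nonneg.mpr hc'), mul_nonneg ha.le (sub_nonneg.mpr hs')]
  have h2a : c * (s0 + s1 * x) ^ 2 ≤ c0 * (2 * s0 ^ 2 + 2 * s1 ^ 2 * x ^ 2) :=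
    mul_le_mul hc2 hP (sq_nonneg _) hc0
  have h2b := mul_le_mul_of_nonneg_right h2a hRpos
  have h2c : c0 * (2 * s0 ^ 2 + 2 * s1 ^ 2 * x ^ 2)
        * (6 * x ^ 2 * Real.cos th ^ 2 + a * Real.sin th ^ 2)
      ≤ c0 * (2 * s0 ^ 2 + 2 * s1 ^ 2 * x ^ 2) * (6 * x ^ 2 + a) :=
    mul_le_mul_of_nonneg_left hR (by positivity)
  have h2 : c * (s0 + s1 * x) ^ 2 * (6 * x ^ 2 * Real.cos th ^ 2 + a * Real.sin th ^ 2)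
      ≤ c0 * (2 * s0 ^ 2 + 2 * s1 ^ 2 * x ^ 2) * (6 * x ^ 2 + a) := h2b.trans h2c
  -- the cubic bound
  have hcube := cube_aux m B (x ^ 2) hm hB.le (sq_nonneg x)
  have e1 : (x ^ 2) ^ 2 = x ^ 4 := by ring
  have e2 : (x ^ 2) ^ 3 = x ^ 6 := by ring
  rw [e1, e2] at hcube
  -- linearization identities
  have hy : s * y ^ 2 = 2 * a * l2 * y ^ 2 - a * g * y ^ 2 := by
    rw [hs_def, hg_def]; ring
  have hmx : m * x ^ 6 = 4 * l1 * x ^ 6 - k * x ^ 6 := by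
    rw [hm_def]; ring
  have hBx : B * x ^ 4 = 4 * l1 * x ^ 4 + 12 * c0 * s1 ^ 2 * x ^ 4 + g * x ^ 4 + A2 * x ^ 4 := by
    rw [hB_def]; ring
  have hA2a : A2 * x ^ 2 = k * x ^ 2 + 12 * c0 * s0 ^ 2 * x ^ 2 + 2 * a * c0 * s1 ^ 2 * x ^ 2 := by
    rw [hA2_def]; ring
  have hA2c : 0 ≤ A2 * (x ^ 4 + 1 / 4 - x ^ 2) :=
    mul_nonneg hA2 (by linarith [sq_nonneg (x ^ 2 - 1 / 2)])
  have hkx : 0 ≤ k * x ^ 4 := mul_nonneg hk.le (by positivity)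
  linarith [h1, h2, hy, hmx, hBx, hA2a, hcube, hA2c, hkx]
end

section
/- Let λ1, λ2, λ3 > 0 and let (x(t), y(t)) solve x' = λ1x(1−x²), y' = −λ2y + λ3x(1−x²) with initial condition (x0, y0). If x0 > 0, then (x(t), y(t)) → (1, 0) as t → ∞; if x0 < 0, then (x(t), y(t)) → (−1, 0); if x0 = 0, then (x(t), y(t)) → (0, 0). -/
open Filter Real Set

noncomputable def Dfun (l1 x0 : ℝ) : ℝ → ℝ := fun t => x0^2 + (1 - x0^2) * Real.exp (-(2*l1*t))

noncomputable def phi (l1 x0 : ℝ) : ℝ → ℝ := fun t => x0 / Real.sqrt (Dfun l1 x0 t)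

lemma Dfun_pos (l1 x0 : ℝ) (hl1 : 0 < l1) {t : ℝ} (ht : 0 ≤ t) : 0 < Dfun l1 x0 t := by
  have h1 : Real.exp (-(2*l1*t)) ≤ 1 := Real.exp_le_one_iff.2 (by nlinarith)
  have h2 : 0 < Real.exp (-(2*l1*t)) := Real.exp_pos _
  unfold Dfun
  nlinarith [sq_nonneg x0]

lemma phi_hasDerivAt (l1 x0 : ℝ) (hl1 : 0 < l1) {t : ℝ} (ht : 0 ≤ t) :
    HasDerivAt (phi l1 x0) (l1 * phi l1 x0 t * (1 - (phi l1 x0 t)^2)) t := by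
  have hD : 0 < Dfun l1 x0 t := Dfun_pos l1 x0 hl1 ht
  have hs : 0 < Real.sqrt (Dfun l1 x0 t) := Real.sqrt_pos.2 hD
  have hs2 : Real.sqrt (Dfun l1 x0 t) ^ 2 = Dfun l1 x0 t := Real.sq_sqrt hD.le
  have hlin : HasDerivAt (fun u : ℝ => -(2*l1*u)) (-(2*l1)) t := by
    have h := ((hasDerivAt_id' t).const_mul (2*l1)).neg; simp only [mul_one] at h; exact h
  have hE : HasDerivAt (fun u : ℝ => Real.exp (-(2*l1*u)))
      (Real.exp (-(2*l1*t)) * (-(2*l1))) t := hlin.exp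
  have hDd : HasDerivAt (Dfun l1 x0)
      ((1 - x0^2) * (Real.exp (-(2*l1*t)) * (-(2*l1)))) t := by
    exact (hE.const_mul (1 - x0^2)).const_add (x0^2)
  have hsd := hDd.sqrt (ne_of_gt hD)
  have hinv := hsd.inv (ne_of_gt hs)
  have hfull := hinv.const_mul x0
  have heq : (phi l1 x0) = fun u => x0 * (Real.sqrt (Dfun l1 x0 u))⁻¹ := by
    funext u; simp [phi, div_eq_mul_inv]
  rw [heq]
  refine hfull.congr_deriv ?_; symm
  beta_reduce
  have hE1 : Real.exp (-(2*l1*t)) > 0 := Real.exp_pos _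
  field_simp
  rw [ Dfun] at hs2 ⊢
  rw [hs2]; ring_nf

lemma phi_zero (l1 x0 : ℝ) : phi l1 x0 0 = x0 := by
  simp [phi, Dfun]

lemma phi_abs_le (l1 x0 : ℝ) (hl1 : 0 < l1) {t : ℝ} (ht : 0 ≤ t) :
    |phi l1 x0 t| ≤ max 1 |x0| := by
  have hD : 0 < Dfun l1 x0 t := Dfun_pos l1 x0 hl1 ht
  have hs : 0 < Real.sqrt (Dfun l1 x0 t) := Real.sqrt_pos.2 hD
  have hs2 : Real.sqrt (Dfun l1 x0 t) ^ 2 = Dfun l1 x0 t := Real.sq_sqrt hD.le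
  have h1 : Real.exp (-(2*l1*t)) ≤ 1 := Real.exp_le_one_iff.2 (by nlinarith)
  have h2 : 0 < Real.exp (-(2*l1*t)) := Real.exp_pos _
  have habs : |phi l1 x0 t| = |x0| / Real.sqrt (Dfun l1 x0 t) := by
    rw [phi, abs_div, abs_of_pos hs]
  rw [habs, div_le_iff₀ hs]
  rcases le_or_gt (x0^2) 1 with h | h
  · calc |x0| ≤ Real.sqrt (x0^2) := by rw [Real.sqrt_sq_eq_abs]
    _ ≤ Real.sqrt (Dfun l1 x0 t) := Real.sqrt_le_sqrt (by rw [Dfun]; nlinarith)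
    _ ≤ max 1 |x0| * Real.sqrt (Dfun l1 x0 t) := le_mul_of_one_le_left hs.le (le_max_left _ _)
  · have hb : 1 ≤ |x0| := by nlinarith [abs_nonneg x0, sq_abs x0]
    have hD1 : 1 ≤ Dfun l1 x0 t := by rw [Dfun]; nlinarith
    have hs1 : 1 ≤ Real.sqrt (Dfun l1 x0 t) := by
      rw [show (1:ℝ) = Real.sqrt 1 by simp]; exact Real.sqrt_le_sqrt hD1
    rw [max_eq_right hb]
    exact le_mul_of_one_le_right (abs_nonneg _) hs1

lemma x_eq_phi (l1 : ℝ) (hl1 : 0 < l1) (x : ℝ → ℝ) (x0 : ℝ)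
    (hx : ∀ t ∈ Set.Ici (0:ℝ), HasDerivAt x (l1 * x t * (1 - (x t)^2)) t)
    (hx0 : x 0 = x0) : ∀ t ∈ Set.Ici (0:ℝ), x t = phi l1 x0 t := by
  intro b hb
  have hxc : ContinuousOn x (Icc 0 b) := fun t ht =>
    ((hx t ht.1).continuousAt).continuousWithinAt
  obtain ⟨C, hC⟩ := (isCompact_Icc (a := (0:ℝ)) (b := b)).exists_bound_of_continuousOn hxc
  set M : ℝ := max (max 1 |x0|) C with hM
  have hM1 : (1:ℝ) ≤ M := le_trans (le_max_left _ _) (le_max_left _ _)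
  set K : NNReal := Real.toNNReal (l1 * (1 + 3 * M^2)) with hK
  have hlip : LipschitzOnWith K (fun u => l1 * u * (1 - u^2)) (Icc (-M) M) := by
    apply (convex_Icc (-M) M).lipschitzOnWith_of_nnnorm_hasDerivWithin_le
      (f' := fun u => l1 * (1 - 3 * u^2))
    · intro u hu
      have h1 : HasDerivAt (fun u : ℝ => l1 * u * (1 - u^2))
          (l1 * (1 - 3 * u^2)) u := by
        have := (((hasDerivAt_id u).const_mul l1).mul ((hasDerivAt_pow 2 u).const_sub 1))
        refine this.congr_deriv ?_; simp only [id_eq]; push_cast; ring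
      exact h1.hasDerivWithinAt
    · intro u hu
      rw [← NNReal.coe_le_coe, coe_nnnorm, Real.norm_eq_abs, hK,
        Real.coe_toNNReal _ (by positivity)]
      rw [abs_mul, abs_of_pos hl1]
      have : |u| ≤ M := abs_le.2 ⟨hu.1, hu.2⟩
      have h2 : |1 - 3 * u^2| ≤ 1 + 3 * M^2 := by
        rw [abs_le]; constructor <;> nlinarith [sq_abs u, sq_nonneg u, abs_nonneg u]
      nlinarith
  have key := ODE_solution_unique_of_mem_Icc_right (v := fun _ u => l1 * u * (1 - u^2))
    (s := fun _ => Icc (-M) M) (K := K) (fun _ _ => hlip)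
    hxc (fun t ht => (hx t ht.1).hasDerivWithinAt)
    (fun t ht => by
      have := hC t ⟨ht.1, ht.2.le⟩
      rw [Real.norm_eq_abs] at this
      have : |x t| ≤ M := le_trans this (le_max_right _ _)
      exact abs_le.1 this |> fun h => ⟨h.1, h.2⟩)
    (fun t ht => ((phi_hasDerivAt l1 x0 hl1 ht.1).continuousAt).continuousWithinAt)
    (fun t ht => (phi_hasDerivAt l1 x0 hl1 ht.1).hasDerivWithinAt)
    (fun t ht => by
      have := phi_abs_le l1 x0 hl1 ht.1
      have : |phi l1 x0 t| ≤ M := le_trans this (le_max_left _ _)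
      exact abs_le.1 this |> fun h => ⟨h.1, h.2⟩)
    (by rw [hx0, phi_zero])
  exact key ⟨hb, le_refl b⟩

lemma exp_neg_tendsto (c : ℝ) (hc : 0 < c) :
    Tendsto (fun t : ℝ => Real.exp (-(c * t))) atTop (nhds 0) := by
  have h1 : Tendsto (fun t : ℝ => c * t) atTop atTop :=
    Tendsto.const_mul_atTop hc tendsto_id
  exact Real.tendsto_exp_atBot.comp (tendsto_neg_atTop_atBot.comp h1)

lemma y_tendsto_zero (l2 : ℝ) (hl2 : 0 < l2) (g y : ℝ → ℝ)
    (hgc : Continuous g) (hg0 : Tendsto g atTop (nhds 0))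
    (hy : ∀ t ∈ Set.Ici (0:ℝ), HasDerivAt y (-l2 * y t + g t) t) :
    Tendsto y atTop (nhds 0) := by
  set G : ℝ → ℝ := fun s => Real.exp (l2 * s) * g s with hG
  have hGc : Continuous G := (Real.continuous_exp.comp (continuous_const.mul continuous_id)).mul hgc
  set F : ℝ → ℝ := fun t => ∫ s in (0:ℝ)..t, G s with hF
  have hF' : ∀ t : ℝ, HasDerivAt F (G t) t := fun t =>
    intervalIntegral.integral_hasDerivAt_right (hGc.intervalIntegrable _ _)
      (hGc.stronglyMeasurableAtFilter _ _) hGc.continuousAt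
  have hexp : ∀ t : ℝ, HasDerivAt (fun u : ℝ => Real.exp (l2 * u))
      (Real.exp (l2 * t) * l2) t := fun t => by
    simpa [mul_comm] using ((hasDerivAt_id t).const_mul l2).exp
  have key : ∀ t ∈ Set.Ici (0:ℝ), Real.exp (l2 * t) * y t - F t = y 0 := by
    intro b hb
    have hderiv : ∀ t ∈ Set.Ici (0:ℝ),
        HasDerivAt (fun u => Real.exp (l2 * u) * y u - F u) 0 t := by
      intro t ht
      have h1 := ((hexp t).mul (hy t ht)).sub (hF' t)
      refine h1.congr_deriv ?_
      simp only [hG]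
      ring
    have hcst := constant_of_has_deriv_right_zero
      (f := fun u => Real.exp (l2 * u) * y u - F u) (a := 0) (b := b)
      (fun t ht => (hderiv t ht.1).continuousAt.continuousWithinAt)
      (fun t ht => (hderiv t ht.1).hasDerivWithinAt)
    have := hcst b ⟨hb, le_refl b⟩
    simpa [hF, intervalIntegral.integral_same] using this
  have hrep : ∀ t ∈ Set.Ici (0:ℝ), y t = Real.exp (-(l2 * t)) * (y 0 + F t) := by
    intro t ht
    have h1 := key t ht
    have h2 : Real.exp (l2 * t) ≠ 0 := (Real.exp_pos _).ne'
    rw [Real.exp_neg]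
    field_simp
    linarith [h1]
  -- limit of the representation
  have hFlim : Tendsto (fun t => Real.exp (-(l2 * t)) * F t) atTop (nhds 0) := by
    rw [NormedAddCommGroup.tendsto_nhds_zero]
    intro ε hε
    obtain ⟨T0, hT0⟩ := (eventually_atTop.1
      (hg0 (Metric.ball_mem_nhds 0 (by positivity : (0:ℝ) < ε * l2 / 2))))
    set T := max T0 0 with hT
    have hgT : ∀ s ≥ T, |g s| ≤ ε * l2 / 2 := by
      intro s hs
      have := hT0 s (le_trans (le_max_left _ _) hs)
      simp only [Metric.mem_ball, Real.dist_eq, sub_zero] at this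
      linarith
    have hsmall : Tendsto (fun t => Real.exp (-(l2 * t)) * |F T|) atTop (nhds 0) := by
      simpa using (exp_neg_tendsto l2 hl2).mul_const (|F T|)
    have hev1 : ∀ᶠ t in atTop, Real.exp (-(l2 * t)) * |F T| < ε / 2 := by
      have := hsmall (Iio_mem_nhds (by positivity : (0:ℝ) < ε / 2))
      simpa [Set.mem_Iio] using this
    filter_upwards [hev1, eventually_ge_atTop T] with t h1 h2
    have hint : F t = F T + ∫ s in T..t, G s := by
      rw [hF]
      rw [intervalIntegral.integral_add_adjacent_intervals
        (hGc.intervalIntegrable _ _) (hGc.intervalIntegrable _ _)]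
    have hbound : |∫ s in T..t, G s| ≤ ε / 2 * Real.exp (l2 * t) := by
      have hab : T ≤ t := h2
      have h3 : |∫ s in T..t, G s| ≤ ∫ s in T..t, |G s| :=
        intervalIntegral.abs_integral_le_integral_abs hab
      have h4 : ∫ s in T..t, |G s| ≤ ∫ s in T..t, Real.exp (l2 * s) * (ε * l2 / 2) := by
        apply intervalIntegral.integral_mono_on hab
        · exact (hGc.abs).intervalIntegrable _ _
        · exact (Continuous.intervalIntegrable ((Real.continuous_exp.comp (continuous_const.mul continuous_id)).mul continuous_const) _ _)
        · intro s hs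
          rw [hG, abs_mul, abs_of_pos (Real.exp_pos _)]
          exact mul_le_mul_of_nonneg_left (hgT s hs.1) (Real.exp_pos _).le
      have h5 : ∫ s in T..t, Real.exp (l2 * s) * (ε * l2 / 2)
          = ε / 2 * Real.exp (l2 * t) - ε / 2 * Real.exp (l2 * T) := by
        have hanti : ∀ s ∈ Set.uIcc T t, HasDerivAt (fun u => ε / 2 * Real.exp (l2 * u))
            (Real.exp (l2 * s) * (ε * l2 / 2)) s := by
          intro s _
          have := (hexp s).const_mul (ε / 2)
          refine this.congr_deriv ?_
          ring
        rw [intervalIntegral.integral_eq_sub_of_hasDerivAt hanti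
          (Continuous.intervalIntegrable ((Real.continuous_exp.comp (continuous_const.mul continuous_id)).mul continuous_const) _ _)]
      have h6 : 0 < Real.exp (l2 * T) := Real.exp_pos _
      calc |∫ s in T..t, G s| ≤ ∫ s in T..t, Real.exp (l2 * s) * (ε * l2 / 2) :=
        le_trans h3 h4
      _ = ε / 2 * (Real.exp (l2 * t)) - ε / 2 * Real.exp (l2 * T) := h5
      _ ≤ ε / 2 * Real.exp (l2 * t) := by nlinarith
    have hpos : (0:ℝ) < Real.exp (-(l2 * t)) := Real.exp_pos _
    have hee : Real.exp (-(l2 * t)) * Real.exp (l2 * t) = 1 := by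
      rw [← Real.exp_add]; simp
    calc ‖Real.exp (-(l2 * t)) * F t‖ = Real.exp (-(l2 * t)) * |F t| := by
          rw [Real.norm_eq_abs, abs_mul, abs_of_pos hpos]
    _ ≤ Real.exp (-(l2 * t)) * (|F T| + ε / 2 * Real.exp (l2 * t)) := by
          apply mul_le_mul_of_nonneg_left _ hpos.le
          rw [hint]
          exact le_trans (abs_add_le _ _) (by linarith [hbound])
    _ = Real.exp (-(l2 * t)) * |F T| + ε / 2 * (Real.exp (-(l2 * t)) * Real.exp (l2 * t)) := by
          ring
    _ = Real.exp (-(l2 * t)) * |F T| + ε / 2 := by rw [hee]; ring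
    _ < ε / 2 + ε / 2 := by linarith
    _ = ε := by ring
  have hy0lim : Tendsto (fun t => Real.exp (-(l2 * t)) * y 0) atTop (nhds 0) := by
    simpa using (exp_neg_tendsto l2 hl2).mul_const (y 0)
  have hlim : Tendsto (fun t => Real.exp (-(l2 * t)) * (y 0 + F t)) atTop (nhds 0) := by
    have := hy0lim.add hFlim
    simp only [add_zero] at this
    convert this using 2 with t
    ring
  apply hlim.congr'
  filter_upwards [eventually_ge_atTop (0:ℝ)] with t ht
  exact (hrep t ht).symm

lemma phi_tendsto (l1 x0 : ℝ) (hl1 : 0 < l1) (hx0 : x0 ≠ 0) :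
    Tendsto (phi l1 x0) atTop (nhds (x0 / |x0|)) := by
  have hE := exp_neg_tendsto (2*l1) (by positivity)
  have hD : Tendsto (Dfun l1 x0) atTop (nhds (x0^2)) := by
    have := (hE.const_mul (1-x0^2)).const_add (x0^2)
    rw [mul_zero, add_zero] at this; exact this
  have hsq : Tendsto (fun t => Real.sqrt (Dfun l1 x0 t)) atTop (nhds |x0|) := by
    have := (Real.continuous_sqrt.tendsto (x0^2)).comp hD
    simpa [Real.sqrt_sq_eq_abs, Function.comp_def] using this
  exact tendsto_const_nhds.div hsq (abs_ne_zero.2 hx0)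

theorem basins_of_attraction (l1 l2 l3 : ℝ) (hl1 : 0 < l1) (hl2 : 0 < l2) (hl3 : 0 < l3)
    (x y : ℝ → ℝ) (x0 y0 : ℝ)
    (hx : ∀ t ∈ Set.Ici (0 : ℝ), HasDerivAt x (l1 * x t * (1 - (x t) ^ 2)) t)
    (hy : ∀ t ∈ Set.Ici (0 : ℝ),
      HasDerivAt y (-l2 * y t + l3 * x t * (1 - (x t) ^ 2)) t)
    (hx0 : x 0 = x0) (hy0 : y 0 = y0) :
    (x0 > 0 → Tendsto (fun t => (x t, y t)) atTop (nhds ((1 : ℝ), (0 : ℝ)))) ∧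
    (x0 < 0 → Tendsto (fun t => (x t, y t)) atTop (nhds ((-1 : ℝ), (0 : ℝ)))) ∧
    (x0 = 0 → Tendsto (fun t => (x t, y t)) atTop (nhds ((0 : ℝ), (0 : ℝ)))) := by
  have hxeq := x_eq_phi l1 hl1 x x0 hx hx0
  set m : ℝ → ℝ := fun t => max t 0 with hm
  have hmc : Continuous m := continuous_id.max continuous_const
  set g : ℝ → ℝ := fun t => l3 * x (m t) * (1 - (x (m t))^2) with hg
  have hxmc : Continuous (fun t => x (m t)) := continuous_iff_continuousAt.2
    (fun t => ((hx (m t) (le_max_right t 0)).continuousAt).comp hmc.continuousAt)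
  have hgc : Continuous g := (continuous_const.mul hxmc).mul
    (continuous_const.sub (hxmc.pow 2))
  have hyg : ∀ t ∈ Set.Ici (0:ℝ), HasDerivAt y (-l2 * y t + g t) t := by
    intro t ht
    have hmt : m t = t := max_eq_left ht
    simpa [hg, hmt] using hy t ht
  have main : ∀ L : ℝ, Tendsto x atTop (nhds L) → l3 * L * (1 - L^2) = 0 →
      Tendsto (fun t => (x t, y t)) atTop (nhds (L, (0:ℝ))) := by
    intro L hxlim hL
    have hxm_lim : Tendsto (fun t => x (m t)) atTop (nhds L) := by
      apply hxlim.congr'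
      filter_upwards [eventually_ge_atTop (0:ℝ)] with t ht
      rw [hm]; simp [max_eq_left ht]
    have hglim : Tendsto g atTop (nhds 0) := by
      have h1 : Tendsto g atTop (nhds (l3 * L * (1 - L^2))) :=
        (tendsto_const_nhds.mul hxm_lim).mul (tendsto_const_nhds.sub (hxm_lim.pow 2))
      rwa [hL] at h1
    exact hxlim.prodMk_nhds (y_tendsto_zero l2 hl2 g y hgc hglim hyg)
  have hphi_eq : (phi l1 x0) =ᶠ[atTop] x := by
    filter_upwards [eventually_ge_atTop (0:ℝ)] with t ht
    exact (hxeq t ht).symm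
  refine ⟨fun h => ?_, fun h => ?_, fun h => ?_⟩
  · have hp := phi_tendsto l1 x0 hl1 (ne_of_gt h)
    rw [abs_of_pos h, div_self (ne_of_gt h)] at hp
    exact main 1 (hp.congr' hphi_eq) (by ring)
  · have hp := phi_tendsto l1 x0 hl1 (ne_of_lt h)
    rw [abs_of_neg h] at hp
    have : x0 / -x0 = -1 := by rw [div_neg, div_self (ne_of_lt h)]
    rw [this] at hp
    exact main (-1) (hp.congr' hphi_eq) (by ring)
  · have hp : Tendsto (phi l1 x0) atTop (nhds 0) := by
      have : phi l1 x0 = fun _ => 0 := by funext t; simp [phi, h]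
      rw [this]; exact tendsto_const_nhds
    exact main 0 (hp.congr' hphi_eq) (by ring)
end
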